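/- arXiv:2308.12858 — 7 statements merged into one kernel-verified Lean document; each statement's English description precedes it below -/
import Mathlib

section
/- Let n ≥ 1, let V : Fin n → Fin n → ℝ be a matrix, and let σ : Equiv.Perm (Fin n) be a permutation maximizing the assignment value, i.e., for every permutation π : Equiv.Perm (Fin n), ∑_{j} V (π j) j ≤ ∑_{j} V (σ j) j. Define V' i j = V (σ i) j. Then for every r ≥ 1 and every injective tuple of indices i₁, i₂, …, i_r in Fin n, the cyclic off-diagonal sum is bounded by the diagonal sum: V'_{i₂ i₁} + V'_{i₃ i₂} + … + V'_{i_r i_{r−1}} + V'_{i₁ i_r} ≤ V'_{i₁ i₁} + V'_{i₂ i₂} + … + V'_{i_r i_r}. -/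
/-!
Extend the cycle `i₁ ↦ i₂ ↦ ⋯ ↦ i_r ↦ i₁` by the identity to a permutation `c` of all items.
Reassigning item `j` to buyer `σ (c j)` changes the assignment value only on the cycle, by
the off-diagonal sum minus the diagonal sum; optimality of `σ` makes this change nonpositive.
-/

open Finset

section

variable {α β M : Type*} [Fintype α] [Fintype β] [DecidableEq α]

theorem Equiv.Perm.sum_viaEmbedding_add_sum_diag [AddCommMonoid M]
    (e : Equiv.Perm β) (f : β ↪ α) (g : α → α → M) :
    ∑ j, g (e.viaEmbedding f j) j + ∑ k, g (f k) (f k)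
      = ∑ j, g j j + ∑ k, g (f (e k)) (f k) := by
  have hsplit (h : α → M) : ∑ j, h j = ∑ k, h (f k) + ∑ j ∈ (univ.map f)ᶜ, h j := by
    rw [← sum_add_sum_compl (univ.map f) h, sum_map]
  have hcompl : ∑ j ∈ (univ.map f)ᶜ, g (e.viaEmbedding f j) j = ∑ j ∈ (univ.map f)ᶜ, g j j := by
    refine sum_congr rfl fun j hj => ?_
    have hj : j ∉ Set.range f := by simpa using hj
    rw [e.viaEmbedding_apply_of_notMem f j hj]
  rw [hsplit fun j => g (e.viaEmbedding f j) j, hsplit fun j => g j j, hcompl]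
  simp only [e.viaEmbedding_apply]
  abel

theorem sum_comp_embedding_le_of_forall_sum_le [AddCommGroup M] [PartialOrder M]
    [IsOrderedAddMonoid M] {V : α → α → M} {σ : Equiv.Perm α}
    (hσ : ∀ π : Equiv.Perm α, ∑ j, V (π j) j ≤ ∑ j, V (σ j) j)
    (e : Equiv.Perm β) (f : β ↪ α) :
    ∑ k, V (σ (f (e k))) (f k) ≤ ∑ k, V (σ (f k)) (f k) := by
  have hvalue := Equiv.Perm.sum_viaEmbedding_add_sum_diag e f fun a j => V (σ a) j
  have hopt := add_le_add_left (hσ (σ * e.viaEmbedding f)) (∑ k, V (σ (f k)) (f k))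
  simp only [Equiv.Perm.mul_apply] at hopt
  rw [hvalue] at hopt
  exact le_of_add_le_add_left hopt

end

theorem cyclic_offdiag_le_diag_general
    (n : ℕ) (V : Fin n → Fin n → ℝ)
    (σ : Equiv.Perm (Fin n))
    (hσ : ∀ π : Equiv.Perm (Fin n), ∑ j, V (π j) j ≤ ∑ j, V (σ j) j)
    (V' : Fin n → Fin n → ℝ) (hV' : ∀ i j, V' i j = V (σ i) j)
    (r : ℕ) (i : Fin (r + 1) → Fin n) (hi : Function.Injective i) :
    ∑ k : Fin (r + 1), V' (i (k + 1)) (i k) ≤ ∑ k : Fin (r + 1), V' (i k) (i k) := by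
  simp only [hV']
  exact sum_comp_embedding_le_of_forall_sum_le hσ (Equiv.addRight 1) ⟨i, hi⟩

/-- Lemma 1 (Arbib et al. / PricesEFPM paper): if `σ` is an assignment-value
maximizing permutation and `V' i j = V (σ i) j`, then every cyclic off-diagonal
sum of `V'` over distinct indices is bounded by the corresponding diagonal sum. -/
theorem cyclic_offdiag_le_diag
    (n : ℕ) (hn : 1 ≤ n) (V : Fin n → Fin n → ℝ)
    (σ : Equiv.Perm (Fin n))
    (hσ : ∀ π : Equiv.Perm (Fin n), ∑ j, V (π j) j ≤ ∑ j, V (σ j) j)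
    (V' : Fin n → Fin n → ℝ) (hV' : ∀ i j, V' i j = V (σ i) j)
    (r : ℕ) (i : Fin (r + 1) → Fin n) (hi : Function.Injective i) :
    ∑ k : Fin (r + 1), V' (i (k + 1)) (i k) ≤ ∑ k : Fin (r + 1), V' (i k) (i k) :=
  cyclic_offdiag_le_diag_general n V σ hσ V' hV' r i hi
end

section
/- Let n ≥ 1, let V : Fin n → Fin n → ℝ, let σ : Equiv.Perm (Fin n) maximize ∑_j V (π j) j over all permutations π, let V' i j = V (σ i) j, and define the utility-difference matrix U by U i j = V' i j − V' j j. Then for every r ≥ 1 and every injective tuple of indices i₁, i₂, …, i_r in Fin n, the cyclic sum of U is nonpositive: U_{i₂ i₁} + U_{i₃ i₂} + … + U_{i_r i_{r−1}} + U_{i₁ i_r} ≤ 0. -/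
/-!
Cycling the indices `i₀ → i₁ → ⋯ → i_r → i₀` and fixing every other index is a permutation `c`,
and since `U` vanishes on the diagonal the cyclic sum equals `∑ j, U (c j) j`. This is the gain
`∑ j, V (σ (c j)) j - ∑ j, V (σ j) j` of replacing the matching `σ` by `σ ∘ c`, which is
nonpositive because `σ` is optimal.
-/

open Finset

namespace Equiv.Perm

variable {α : Type*} [DecidableEq α] {r : ℕ}

theorem viaFintypeEmbedding_finRotate_apply (e : Fin (r + 1) ↪ α) (k : Fin (r + 1)) :
    (finRotate (r + 1)).viaFintypeEmbedding e (e k) = e (k + 1) := by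
  rw [viaFintypeEmbedding_apply_image, finRotate_apply]

theorem sum_cycle_eq_sum_viaFintypeEmbedding_finRotate [Fintype α] {M : Type*} [AddCommMonoid M]
    (g : α → α → M) (hg : ∀ a, g a a = 0) (e : Fin (r + 1) ↪ α) :
    ∑ k, g (e (k + 1)) (e k) = ∑ a, g ((finRotate (r + 1)).viaFintypeEmbedding e a) a := by
  refine Fintype.sum_of_injective e e.injective _ _ (fun a ha => ?_) (fun k => ?_)
  · rw [viaFintypeEmbedding_apply_notMem_range _ _ ha, hg]
  · rw [viaFintypeEmbedding_finRotate_apply]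

end Equiv.Perm

theorem cyclic_sum_nonpos_general
    (n : ℕ) (V : Fin n → Fin n → ℝ)
    (σ : Equiv.Perm (Fin n))
    (hσ : ∀ π : Equiv.Perm (Fin n), ∑ j, V (π j) j ≤ ∑ j, V (σ j) j)
    (V' : Fin n → Fin n → ℝ) (hV' : ∀ i j, V' i j = V (σ i) j)
    (U : Fin n → Fin n → ℝ) (hU : ∀ i j, U i j = V' i j - V' j j)
    (r : ℕ) (i : Fin (r + 1) → Fin n) (hi : Function.Injective i) :
    ∑ k : Fin (r + 1), U (i (k + 1)) (i k) ≤ 0 := by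
  set c := (finRotate (r + 1)).viaFintypeEmbedding ⟨i, hi⟩
  have hdiag (j : Fin n) : U j j = 0 := by rw [hU, sub_self]
  calc ∑ k, U (i (k + 1)) (i k)
      = ∑ j, U (c j) j :=
        Equiv.Perm.sum_cycle_eq_sum_viaFintypeEmbedding_finRotate U hdiag ⟨i, hi⟩
    _ = ∑ j, V ((c.trans σ) j) j - ∑ j, V (σ j) j := by
        simp only [hU, hV', sum_sub_distrib, Equiv.trans_apply]
    _ ≤ 0 := sub_nonpos.mpr (hσ _)

/-- Corollary 1: with `U i j = V' i j - V' j j` for the reindexed valuation matrix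
`V'` of a maximum weight perfect matching `σ`, every cyclic sum of `U` over
distinct indices is nonpositive. -/
theorem cyclic_sum_nonpos
    (n : ℕ) (hn : 1 ≤ n) (V : Fin n → Fin n → ℝ)
    (σ : Equiv.Perm (Fin n))
    (hσ : ∀ π : Equiv.Perm (Fin n), ∑ j, V (π j) j ≤ ∑ j, V (σ j) j)
    (V' : Fin n → Fin n → ℝ) (hV' : ∀ i j, V' i j = V (σ i) j)
    (U : Fin n → Fin n → ℝ) (hU : ∀ i j, U i j = V' i j - V' j j)
    (r : ℕ) (i : Fin (r + 1) → Fin n) (hi : Function.Injective i) :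
    ∑ k : Fin (r + 1), U (i (k + 1)) (i k) ≤ 0 :=
  cyclic_sum_nonpos_general n V σ hσ V' hV' U hU r i hi
end

section
/- Let n ≥ 1 and let U : Fin n → Fin n → ℝ satisfy: (i) U j j = 0 for all j, and (ii) for every r ≥ 1 and every injective tuple i₁, …, i_r in Fin n, the cyclic sum U_{i₂ i₁} + U_{i₃ i₂} + … + U_{i_r i_{r−1}} + U_{i₁ i_r} ≤ 0. Define y : ℕ → Fin n → ℝ by y 0 j = 0 and y (t+1) j = max over k of (y t k + U j k). Then the sequences converge in at most n − 1 steps: for every t ≥ n − 1 and every j ∈ Fin n, y t j = y (n−1) j. -/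
/-!
Unfolding the recursion, `y t j` is the best value `y 0 (w 0) + Σ U (w (s+1)) (w s)` over walks
`w 0, …, w t = j`. A walk with at least `n` steps repeats a vertex; cutting out the closed walk
between the repetitions yields a shorter walk to `j` that is no worse, because every closed walk
splits into simple cycles and these have nonpositive weight. Hence `y t ≤ y (n - 1)` for all `t`,
while `U j j = 0` makes `y t j` nondecreasing in `t`.
-/

open Finset Function

variable {ι M : Type*}

def walkSum [AddCommMonoid M] (U : ι → ι → M) (t : ℕ) (w : ℕ → ι) : M :=
  ∑ s ∈ range t, U (w (s + 1)) (w s)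

def skipSegment (w : ℕ → ι) (a d : ℕ) : ℕ → ι :=
  fun s => if s ≤ a then w s else w (s + d)

section AddCommMonoid

variable [AddCommMonoid M] (U : ι → ι → M)

theorem walkSum_zero (w : ℕ → ι) : walkSum U 0 w = 0 := sum_range_zero _

theorem walkSum_succ (t : ℕ) (w : ℕ → ι) :
    walkSum U (t + 1) w = walkSum U t w + U (w (t + 1)) (w t) :=
  sum_range_succ _ _

theorem walkSum_add (a d : ℕ) (w : ℕ → ι) :
    walkSum U (a + d) w = walkSum U a w + walkSum U d (fun s => w (a + s)) := by
  simp only [walkSum, sum_range_add, add_assoc]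

theorem walkSum_congr {t : ℕ} {w w' : ℕ → ι} (h : ∀ s ≤ t, w s = w' s) :
    walkSum U t w = walkSum U t w' :=
  sum_congr rfl fun s hs => by
    rw [h s (mem_range.mp hs).le, h (s + 1) (mem_range.mp hs)]

theorem skipSegment_of_le {w : ℕ → ι} {a s : ℕ} (d : ℕ) (hs : s ≤ a) :
    skipSegment w a d s = w s :=
  if_pos hs

theorem skipSegment_add {w : ℕ → ι} {a d : ℕ} (hw : w a = w (a + d)) (k : ℕ) :
    skipSegment w a d (a + k) = w (a + d + k) := by
  unfold skipSegment
  split_ifs with hk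
  · obtain rfl : k = 0 := by omega
    exact hw
  · rw [add_right_comm]

theorem walkSum_skipSegment {w : ℕ → ι} {a d : ℕ} (hw : w a = w (a + d)) (m : ℕ) :
    walkSum U (a + d + m) w =
      walkSum U (a + m) (skipSegment w a d) + walkSum U d (fun s => w (a + s)) := by
  have hhead : walkSum U a (skipSegment w a d) = walkSum U a w :=
    walkSum_congr U fun s hs => skipSegment_of_le d hs
  have htail : (fun s => skipSegment w a d (a + s)) = fun s => w (a + d + s) :=
    funext (skipSegment_add hw)
  rw [walkSum_add, walkSum_add, walkSum_add, hhead, htail]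
  simp only [add_assoc]
  abel

theorem sum_fin_eq_walkSum_of_closed {r : ℕ} {w : ℕ → ι} (hw : w 0 = w (r + 1)) :
    ∑ k : Fin (r + 1), U (w (k + 1 : Fin (r + 1))) (w k) = walkSum U (r + 1) w := by
  rw [walkSum, ← Fin.sum_univ_eq_sum_range]
  refine sum_congr rfl fun k _ => ?_
  rw [Fin.val_add_one]
  split_ifs with hk
  · rw [hw, hk, Fin.val_last]
  · rfl

end AddCommMonoid

theorem exists_lt_apply_eq_of_not_injective {α : Type*} [LinearOrder α] {f : α → ι}
    (hf : ¬ Injective f) : ∃ i j, i < j ∧ f i = f j := by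
  obtain ⟨i, j, hij, hne⟩ := not_injective_iff.mp hf
  rcases hne.lt_or_gt with h | h
  · exact ⟨i, j, h, hij⟩
  · exact ⟨j, i, h, hij.symm⟩

def SimpleCyclesNonpos [AddCommMonoid M] [LE M] (U : ι → ι → M) : Prop :=
  ∀ (r : ℕ) (i : Fin (r + 1) → ι), Injective i → ∑ k : Fin (r + 1), U (i (k + 1)) (i k) ≤ 0

theorem walkSum_nonpos_of_closed [AddCommMonoid M] [PartialOrder M] [IsOrderedAddMonoid M]
    {U : ι → ι → M} (hcyc : SimpleCyclesNonpos U) :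
    ∀ (d : ℕ) (w : ℕ → ι), w 0 = w d → walkSum U d w ≤ 0 := by
  intro d
  induction d using Nat.strong_induction_on with
  | _ d ih =>
    intro w hw
    obtain _ | r := d
    · rw [walkSum_zero]
    by_cases hinj : Injective fun k : Fin (r + 1) => w k
    · rw [← sum_fin_eq_walkSum_of_closed U hw]
      exact hcyc r _ hinj
    · obtain ⟨i, j, hij, hwij⟩ := exists_lt_apply_eq_of_not_injective hinj
      obtain ⟨e, he⟩ : ∃ e, (j : ℕ) = i + e := ⟨j - i, by omega⟩
      obtain ⟨m, hm⟩ : ∃ m, r + 1 = i + e + (m + 1) := ⟨r - j, by omega⟩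
      have hwie : w i = w (i + e) := by rw [← he]; exact hwij
      rw [hm, walkSum_skipSegment U hwie]
      -- Cutting the inner cycle at the repeated vertex leaves two shorter closed walks.
      refine add_nonpos (ih _ (by omega) _ ?_) (ih _ (by omega) _ ?_)
      · rw [skipSegment_of_le _ (Nat.zero_le _), skipSegment_add hwie, hw]
        exact congrArg w hm
      · simpa using hwie

def IsMaxPlusIteration [Fintype ι] [Add M] [LinearOrder M] (U : ι → ι → M)
    (hne : (univ : Finset ι).Nonempty) (y : ℕ → ι → M) : Prop :=
  ∀ t j, y (t + 1) j = univ.sup' hne (fun k => y t k + U j k)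

section MaxPlusIteration

variable [Fintype ι] [AddCommMonoid M] [LinearOrder M] {U : ι → ι → M} {y : ℕ → ι → M}
  {hne : (univ : Finset ι).Nonempty}

theorem add_walkSum_le_of_step [IsOrderedAddMonoid M]
    (hstep : IsMaxPlusIteration U hne y) (t : ℕ) (w : ℕ → ι) :
    y 0 (w 0) + walkSum U t w ≤ y t (w t) := by
  induction t with
  | zero => rw [walkSum_zero, add_zero]
  | succ t ih =>
    rw [walkSum_succ, ← add_assoc, hstep]
    exact (add_le_add_left ih _).trans (le_sup' (fun k => y t k + U (w (t + 1)) k) (mem_univ _))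

theorem exists_walk_eq_of_step
    (hstep : IsMaxPlusIteration U hne y) (t : ℕ) (j : ι) :
    ∃ w : ℕ → ι, w t = j ∧ y t j = y 0 (w 0) + walkSum U t w := by
  induction t generalizing j with
  | zero => exact ⟨fun _ => j, rfl, by rw [walkSum_zero, add_zero]⟩
  | succ t ih =>
    obtain ⟨k, -, hk⟩ := exists_mem_eq_sup' hne (fun k => y t k + U j k)
    obtain ⟨w, hwt, hw⟩ := ih k
    have hagree : ∀ s ≤ t, update w (t + 1) j s = w s := fun s hs =>
      update_of_ne (by omega) _ _
    refine ⟨update w (t + 1) j, update_self .., ?_⟩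
    rw [walkSum_succ, walkSum_congr U hagree, hagree 0 (Nat.zero_le _), hagree t le_rfl,
      update_self, hwt, ← add_assoc, ← hw, hstep, hk]

theorem monotone_of_step
    (hstep : IsMaxPlusIteration U hne y)
    (hdiag : ∀ j, U j j = 0) (j : ι) : Monotone fun t => y t j :=
  monotone_nat_of_le_succ fun t => by
    simpa [hdiag] using le_sup' (fun k => y t k + U j k) (mem_univ j) |>.trans_eq (hstep t j).symm

variable [IsOrderedAddMonoid M]

theorem exists_lt_le_of_card_le
    (hcyc : SimpleCyclesNonpos U)
    (hstep : IsMaxPlusIteration U hne y)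
    {t : ℕ} (ht : Fintype.card ι ≤ t) (j : ι) :
    ∃ t' < t, y t j ≤ y t' j := by
  obtain ⟨w, hwt, hw⟩ := exists_walk_eq_of_step hstep t j
  have hninj : ¬ Injective fun s : Fin (t + 1) => w s := fun h => by
    simpa using (Fintype.card_le_of_injective _ h).trans ht
  obtain ⟨⟨a, ha⟩, ⟨b, hb⟩, hab, hwab⟩ := exists_lt_apply_eq_of_not_injective hninj
  rw [Fin.mk_lt_mk] at hab
  obtain ⟨d, rfl⟩ : ∃ d, b = a + d := ⟨b - a, by omega⟩
  obtain ⟨m, hm⟩ : ∃ m, t = a + d + m := ⟨t - (a + d), by omega⟩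
  have hcycle : walkSum U d (fun s => w (a + s)) ≤ 0 :=
    walkSum_nonpos_of_closed hcyc d _ (by simpa using hwab)
  refine ⟨a + m, by omega, ?_⟩
  have hsplit : walkSum U t w =
      walkSum U (a + m) (skipSegment w a d) + walkSum U d (fun s => w (a + s)) := by
    rw [hm, walkSum_skipSegment U hwab]
  calc y t j = y 0 (w 0) + walkSum U t w := hw
    _ ≤ y 0 (skipSegment w a d 0) + walkSum U (a + m) (skipSegment w a d) := by
      rw [hsplit, skipSegment_of_le _ (Nat.zero_le _)]
      gcongr
      exact add_le_of_nonpos_right hcycle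
    _ ≤ y (a + m) (skipSegment w a d (a + m)) := add_walkSum_le_of_step hstep _ _
    _ = y (a + m) j := by rw [skipSegment_add hwab, ← hm, hwt]

theorem le_card_sub_one_of_step (hdiag : ∀ j, U j j = 0)
    (hcyc : SimpleCyclesNonpos U)
    (hstep : IsMaxPlusIteration U hne y)
    (t : ℕ) (j : ι) : y t j ≤ y (Fintype.card ι - 1) j := by
  induction t using Nat.strong_induction_on with
  | _ t ih =>
    rcases le_or_gt t (Fintype.card ι - 1) with ht | ht
    · exact monotone_of_step hstep hdiag j ht
    · obtain ⟨t', ht', hle⟩ := exists_lt_le_of_card_le hcyc hstep (t := t) (by omega) j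
      exact hle.trans (ih t' ht')

end MaxPlusIteration

theorem iteration_converges_general
    (n : ℕ) (hn : 1 ≤ n) (U : Fin n → Fin n → ℝ)
    (hdiag : ∀ j, U j j = 0)
    (hcyc : ∀ (r : ℕ) (i : Fin (r + 1) → Fin n), Function.Injective i →
      ∑ k : Fin (r + 1), U (i (k + 1)) (i k) ≤ 0)
    (y : ℕ → Fin n → ℝ)
    (hstep : ∀ t (j : Fin n), y (t + 1) j =
      Finset.univ.sup' ⟨⟨0, hn⟩, Finset.mem_univ _⟩ (fun k => y t k + U j k)) :
    ∀ t, n - 1 ≤ t → ∀ j : Fin n, y t j = y (n - 1) j := by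
  intro t ht j
  refine le_antisymm ?_ (monotone_of_step hstep hdiag j ht)
  simpa using le_card_sub_one_of_step hdiag hcyc hstep t j

/-- Theorem 1 (convergence): if `U` has zero diagonal and all cyclic sums of `U`
over distinct indices are nonpositive, then the PricesEFPM iteration converges
in at most `n - 1` steps: `y t = y (n-1)` for every `t ≥ n - 1`. -/
theorem iteration_converges
    (n : ℕ) (hn : 1 ≤ n) (U : Fin n → Fin n → ℝ)
    (hdiag : ∀ j, U j j = 0)
    (hcyc : ∀ (r : ℕ) (i : Fin (r + 1) → Fin n), Function.Injective i →
      ∑ k : Fin (r + 1), U (i (k + 1)) (i k) ≤ 0)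
    (y : ℕ → Fin n → ℝ) (h0 : ∀ j, y 0 j = 0)
    (hstep : ∀ t (j : Fin n), y (t + 1) j =
      Finset.univ.sup' ⟨⟨0, hn⟩, Finset.mem_univ _⟩ (fun k => y t k + U j k)) :
    ∀ t, n - 1 ≤ t → ∀ j : Fin n, y t j = y (n - 1) j :=
  iteration_converges_general n hn U hdiag hcyc y hstep
end

section
/- Let n ≥ 1 and let U : Fin n → Fin n → ℝ satisfy: (i) U j j = 0 for all j, and (ii) for every r ≥ 1 and every injective tuple i₁, …, i_r in Fin n, the cyclic sum U_{i₂ i₁} + U_{i₃ i₂} + … + U_{i_r i_{r−1}} + U_{i₁ i_r} ≤ 0. Define y : ℕ → Fin n → ℝ by y 0 j = 0 and y (t+1) j = max over k of (y t k + U j k). Then there exists at least one index j₀ ∈ Fin n such that y t j₀ = 0 for every t ∈ ℕ. -/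
/-!
The diagonal step makes `y` nondecreasing in `t`, hence nonnegative. Each `y t j` is the weight
of a walk of length `t` ending at `j`, and along any walk `y` grows at least by the walk's
weight. A walk of length `n` revisits a vertex; cutting out the first simple cycle, of weight
`≤ 0`, gives `y n ≤ y (n - 1)`. So `π = y (n - 1)` is a potential, `π k + U j k ≤ π j`, and
induction on `t` gives `y t j ≤ π j - min π`, which is `≤ 0` at a minimiser of `π`.
-/

open Finset

section Walks

variable {α : Type*} {U : α → α → ℝ}

-- The step from `w s` to `w (s + 1)` weighs `U (w (s + 1)) (w s)`: this is the orientation of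
-- both the recursion and the cycle condition.
def walkWeight (U : α → α → ℝ) (w : ℕ → α) (a b : ℕ) : ℝ :=
  ∑ s ∈ Ico a b, U (w (s + 1)) (w s)

theorem walkWeight_add_walkWeight (w : ℕ → α) {a b c : ℕ} (hab : a ≤ b) (hbc : b ≤ c) :
    walkWeight U w a b + walkWeight U w b c = walkWeight U w a c :=
  sum_Ico_consecutive _ hab hbc

theorem walkWeight_nonpos_of_injOn
    (hcyc : ∀ (r : ℕ) (i : Fin (r + 1) → α), Function.Injective i →
      ∑ k : Fin (r + 1), U (i (k + 1)) (i k) ≤ 0)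
    {w : ℕ → α} {c d : ℕ} (hcd : c < d) (hclosed : w d = w c)
    (hinj : Set.InjOn w (Set.Ico c d)) :
    walkWeight U w c d ≤ 0 := by
  obtain ⟨r, rfl⟩ : ∃ r, d = c + (r + 1) := ⟨d - c - 1, by omega⟩
  have hcycle := hcyc r (fun k => w (c + k)) fun a b hab =>
    Fin.ext (by simpa using hinj (by simp; omega) (by simp; omega) hab)
  have hnext : ∀ k : Fin (r + 1), w (c + ↑(k + 1)) = w (c + k + 1) := by
    intro k
    rw [Fin.val_add_one]
    split_ifs with hk
    · rw [add_zero, ← hclosed, hk, Fin.val_last, add_assoc]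
    · rw [add_assoc]
  calc walkWeight U w c (c + (r + 1))
      = ∑ k : Fin (r + 1), U (w (c + ↑(k + 1))) (w (c + k)) := by
        simp only [walkWeight, sum_Ico_eq_sum_range, add_tsub_cancel_left, hnext]
        exact (Fin.sum_univ_eq_sum_range (fun s => U (w (c + s + 1)) (w (c + s))) _).symm
    _ ≤ 0 := hcycle

theorem exists_injOn_Ico_of_card_le [Fintype α] (w : ℕ → α) {m : ℕ}
    (hm : Fintype.card α ≤ m) :
    ∃ c d, c < d ∧ d ≤ m ∧ w d = w c ∧ Set.InjOn w (Set.Ico c d) := by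
  have hrepeat : ∃ d, d ≤ m ∧ ∃ c < d, w d = w c := by
    obtain ⟨a, ha, b, hb, hne, hab⟩ := exists_ne_map_eq_of_card_lt_of_maps_to
      (s := range (m + 1)) (t := univ) (f := w)
      (by rw [card_univ, card_range]; omega) (fun _ _ => mem_univ _)
    rw [mem_range] at ha hb
    rcases hne.lt_or_gt with h | h
    · exact ⟨b, by omega, a, h, hab.symm⟩
    · exact ⟨a, by omega, b, h, hab⟩
  classical
  -- the first revisit closes a simple cycle
  obtain ⟨hdm, c, hcd, hwc⟩ := Nat.find_spec hrepeat
  refine ⟨c, Nat.find hrepeat, hcd, hdm, hwc, fun a ha b hb hab => ?_⟩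
  rw [Set.mem_Ico] at ha hb
  by_contra hne
  rcases Ne.lt_or_gt hne with h | h
  · exact absurd (Nat.find_min' hrepeat ⟨by omega, a, h, hab.symm⟩) (by omega)
  · exact absurd (Nat.find_min' hrepeat ⟨by omega, b, h, hab⟩) (by omega)

end Walks

namespace MaxPlusIteration

variable {α : Type*} [Fintype α] {U : α → α → ℝ} {y : ℕ → α → ℝ}
  {hne : (univ : Finset α).Nonempty}

theorem add_le_succ (hstep : ∀ t j, y (t + 1) j = univ.sup' hne fun k => y t k + U j k)
    (t : ℕ) (j k : α) : y t k + U j k ≤ y (t + 1) j :=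
  (hstep t j).symm ▸ le_sup' (fun k => y t k + U j k) (mem_univ k)

theorem exists_succ_eq_add (hstep : ∀ t j, y (t + 1) j = univ.sup' hne fun k => y t k + U j k)
    (t : ℕ) (j : α) : ∃ k, y (t + 1) j = y t k + U j k := by
  obtain ⟨k, -, hk⟩ := exists_mem_eq_sup' hne fun k => y t k + U j k
  exact ⟨k, (hstep t j).trans hk⟩

theorem monotone (hstep : ∀ t j, y (t + 1) j = univ.sup' hne fun k => y t k + U j k)
    (hdiag : ∀ j, U j j = 0) (j : α) : Monotone fun t => y t j :=
  monotone_nat_of_le_succ fun t => by simpa [hdiag] using add_le_succ hstep t j j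

theorem nonneg (hstep : ∀ t j, y (t + 1) j = univ.sup' hne fun k => y t k + U j k)
    (hdiag : ∀ j, U j j = 0) (h0 : ∀ j, y 0 j = 0) (t : ℕ) (j : α) : 0 ≤ y t j :=
  h0 j ▸ monotone hstep hdiag j (Nat.zero_le t)

theorem add_walkWeight_le (hstep : ∀ t j, y (t + 1) j = univ.sup' hne fun k => y t k + U j k)
    (w : ℕ → α) (t a m : ℕ) :
    y t (w a) + walkWeight U w a (a + m) ≤ y (t + m) (w (a + m)) := by
  induction m with
  | zero => simp [walkWeight]
  | succ m ih =>
    rw [walkWeight, ← add_assoc, sum_Ico_succ_top (by omega), ← walkWeight]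
    calc y t (w a) + (walkWeight U w a (a + m) + U (w (a + m + 1)) (w (a + m)))
        ≤ y (t + m) (w (a + m)) + U (w (a + m + 1)) (w (a + m)) := by linarith
      _ ≤ y (t + m + 1) (w (a + m + 1)) := add_le_succ hstep _ _ _

theorem exists_walkWeight_eq (hstep : ∀ t j, y (t + 1) j = univ.sup' hne fun k => y t k + U j k)
    (h0 : ∀ j, y 0 j = 0) (t : ℕ) (j : α) :
    ∃ w : ℕ → α, w t = j ∧ walkWeight U w 0 t = y t j := by
  induction t generalizing j with
  | zero => exact ⟨fun _ => j, rfl, by simp [walkWeight, h0]⟩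
  | succ t ih =>
    obtain ⟨k, hk⟩ := exists_succ_eq_add hstep t j
    obtain ⟨w, hwk, hw⟩ := ih k
    refine ⟨Function.update w (t + 1) j, by simp, ?_⟩
    have hprefix : walkWeight U (Function.update w (t + 1) j) 0 t = walkWeight U w 0 t :=
      sum_congr rfl fun s hs => by
        rw [mem_Ico] at hs
        rw [Function.update_of_ne (by omega), Function.update_of_ne (by omega)]
    rw [walkWeight, sum_Ico_succ_top (Nat.zero_le t), ← walkWeight, hprefix, hw, hk,
      Function.update_self, Function.update_of_ne (by omega), hwk, add_comm]

theorem succ_le_of_card_le (hstep : ∀ t j, y (t + 1) j = univ.sup' hne fun k => y t k + U j k)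
    (hdiag : ∀ j, U j j = 0) (h0 : ∀ j, y 0 j = 0)
    (hcyc : ∀ (r : ℕ) (i : Fin (r + 1) → α), Function.Injective i →
      ∑ k : Fin (r + 1), U (i (k + 1)) (i k) ≤ 0)
    {t : ℕ} (ht : Fintype.card α ≤ t + 1) (j : α) : y (t + 1) j ≤ y t j := by
  obtain ⟨w, hwj, hw⟩ := exists_walkWeight_eq hstep h0 (t + 1) j
  obtain ⟨c, d, hcd, hd, hwd, hinj⟩ := exists_injOn_Ico_of_card_le w ht
  have hcycle := walkWeight_nonpos_of_injOn hcyc hcd hwd hinj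
  have hhead : walkWeight U w 0 c ≤ y c (w c) := by
    simpa [h0] using add_walkWeight_le hstep w 0 0 c
  have htail := add_walkWeight_le hstep w c d (t + 1 - d)
  rw [show d + (t + 1 - d) = t + 1 by omega, hwj, hwd] at htail
  have hshorter : y (c + (t + 1 - d)) j ≤ y t j :=
    monotone hstep hdiag j (show c + (t + 1 - d) ≤ t by omega)
  rw [← hw, ← walkWeight_add_walkWeight w (Nat.zero_le c) (hcd.trans_le hd).le,
    ← walkWeight_add_walkWeight w hcd.le hd]
  linarith

theorem le_sub_of_add_le (hstep : ∀ t j, y (t + 1) j = univ.sup' hne fun k => y t k + U j k)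
    (h0 : ∀ j, y 0 j = 0) {π : α → ℝ} (hπ : ∀ j k, π k + U j k ≤ π j) {m : ℝ}
    (hm : ∀ j, m ≤ π j) (t : ℕ) (j : α) : y t j ≤ π j - m := by
  induction t generalizing j with
  | zero => linarith [h0 j, hm j]
  | succ t ih => exact (hstep t j).symm ▸ sup'_le _ _ fun k _ => by linarith [ih k, hπ j k]

end MaxPlusIteration

open MaxPlusIteration

/-- Corollary 2: under the zero-diagonal and nonpositive cyclic sum hypotheses
on `U`, there is at least one index `j₀` whose iterate stays `0` forever. -/
theorem exists_zero_utility_index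
    (n : ℕ) (hn : 1 ≤ n) (U : Fin n → Fin n → ℝ)
    (hdiag : ∀ j, U j j = 0)
    (hcyc : ∀ (r : ℕ) (i : Fin (r + 1) → Fin n), Function.Injective i →
      ∑ k : Fin (r + 1), U (i (k + 1)) (i k) ≤ 0)
    (y : ℕ → Fin n → ℝ) (h0 : ∀ j, y 0 j = 0)
    (hstep : ∀ t (j : Fin n), y (t + 1) j =
      Finset.univ.sup' ⟨⟨0, hn⟩, Finset.mem_univ _⟩ (fun k => y t k + U j k)) :
    ∃ j₀ : Fin n, ∀ t : ℕ, y t j₀ = 0 := by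
  have hfixed : ∀ j k, y (n - 1) k + U j k ≤ y (n - 1) j := fun j k =>
    (add_le_succ hstep _ j k).trans
      (succ_le_of_card_le hstep hdiag h0 hcyc (by rw [Fintype.card_fin]; omega) j)
  obtain ⟨j₀, -, hj₀⟩ := exists_min_image univ (y (n - 1)) ⟨⟨0, hn⟩, mem_univ _⟩
  refine ⟨j₀, fun t => le_antisymm ?_ (nonneg hstep hdiag h0 t j₀)⟩
  simpa using le_sub_of_add_le hstep h0 hfixed (fun j => hj₀ j (mem_univ j)) t j₀
end

section
/- Let n ≥ 1 and let U : Fin n → Fin n → ℝ satisfy: (i) U j j = 0 for all j, and (ii) for every r ≥ 1 and every injective tuple i₁, …, i_r in Fin n, the cyclic sum U_{i₂ i₁} + U_{i₃ i₂} + … + U_{i_r i_{r−1}} + U_{i₁ i_r} ≤ 0. Define y : ℕ → Fin n → ℝ by y 0 j = 0 and y (t+1) j = max over k of (y t k + U j k), and let ȳ j = y (n−1) j be the limit values. Then ȳ is the minimal nonnegative solution of the utility constraints: if z : Fin n → ℝ satisfies z j ≥ 0 for all j and z j ≥ z k + U j k for all j ≠ k, then z j ≥ ȳ j for every j. -/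
theorem iterate_le_of_add_le {ι α : Type*} [LinearOrder α] [Add α] [AddRightMono α]
    {U : ι → ι → α} {z : ι → α} {s : Finset ι} (hs : s.Nonempty) (y : ℕ → ι → α)
    (hstep : ∀ t j, y (t + 1) j = s.sup' hs (fun k => y t k + U j k))
    (hz : ∀ j k, z k + U j k ≤ z j) (h0 : ∀ j, y 0 j ≤ z j) :
    ∀ t j, y t j ≤ z j := by
  intro t
  induction t with
  | zero => exact h0
  | succ t ih =>
    intro j
    rw [hstep]
    exact Finset.sup'_le hs _ fun k _ => (add_le_add_left (ih k) _).trans (hz j k)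

theorem add_le_of_diag_eq_zero {ι α : Type*} [AddZeroClass α] [Preorder α]
    {U : ι → ι → α} {z : ι → α}
    (hdiag : ∀ j, U j j = 0) (hz : ∀ j k, j ≠ k → z j ≥ z k + U j k) (j k : ι) :
    z k + U j k ≤ z j := by
  obtain rfl | hjk := eq_or_ne j k
  · simp [hdiag]
  · exact hz j k hjk

theorem limit_is_minimal_feasible_general
    (n : ℕ) (hn : 1 ≤ n) (U : Fin n → Fin n → ℝ)
    (hdiag : ∀ j, U j j = 0)
    (y : ℕ → Fin n → ℝ) (h0 : ∀ j, y 0 j = 0)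
    (hstep : ∀ t (j : Fin n), y (t + 1) j =
      Finset.univ.sup' ⟨⟨0, hn⟩, Finset.mem_univ _⟩ (fun k => y t k + U j k))
    (ybar : Fin n → ℝ) (hybar : ∀ j, ybar j = y (n - 1) j)
    (z : Fin n → ℝ) (hznn : ∀ j, 0 ≤ z j)
    (hz : ∀ j k : Fin n, j ≠ k → z j ≥ z k + U j k) :
    ∀ j : Fin n, z j ≥ ybar j := by
  intro j
  rw [hybar]
  exact iterate_le_of_add_le _ y hstep (add_le_of_diag_eq_zero hdiag hz)
    (fun k => (h0 k).trans_le (hznn k)) (n - 1) j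

/-- Corollary 4 (minimality): the limit values `ȳ j = y (n-1) j` of the
PricesEFPM iteration form the minimal nonnegative solution of the utility
constraints: any nonnegative `z` with `z j ≥ z k + U j k` for all `j ≠ k`
dominates `ȳ` pointwise. -/
theorem limit_is_minimal_feasible
    (n : ℕ) (hn : 1 ≤ n) (U : Fin n → Fin n → ℝ)
    (hdiag : ∀ j, U j j = 0)
    (hcyc : ∀ (r : ℕ) (i : Fin (r + 1) → Fin n), Function.Injective i →
      ∑ k : Fin (r + 1), U (i (k + 1)) (i k) ≤ 0)
    (y : ℕ → Fin n → ℝ) (h0 : ∀ j, y 0 j = 0)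
    (hstep : ∀ t (j : Fin n), y (t + 1) j =
      Finset.univ.sup' ⟨⟨0, hn⟩, Finset.mem_univ _⟩ (fun k => y t k + U j k))
    (ybar : Fin n → ℝ) (hybar : ∀ j, ybar j = y (n - 1) j)
    (z : Fin n → ℝ) (hznn : ∀ j, 0 ≤ z j)
    (hz : ∀ j k : Fin n, j ≠ k → z j ≥ z k + U j k) :
    ∀ j : Fin n, z j ≥ ybar j :=
  limit_is_minimal_feasible_general n hn U hdiag y h0 hstep ybar hybar z hznn hz
end

section
/- Let n ≥ 1, let V' : Fin n → Fin n → ℝ be entrywise nonnegative, and define U j k = V' j k − V' k k. Suppose y : Fin n → ℝ satisfies y j ≥ 0 and y j ≥ y k + U j k for all j ≠ k, and suppose there exists i ∈ Fin n with y i = 0. Then y j ≤ V' j j for every j ∈ Fin n; equivalently, the prices p j = V' j j − y j are nonnegative and each buyer's utility for his allocated item is nonnegative. -/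
theorem utilities_le_diagonal_general
    (n : ℕ) (V' : Fin n → Fin n → ℝ)
    (hVnn : ∀ j k : Fin n, 0 ≤ V' j k)
    (U : Fin n → Fin n → ℝ) (hU : ∀ j k, U j k = V' j k - V' k k)
    (y : Fin n → ℝ)
    (hy : ∀ j k : Fin n, j ≠ k → y j ≥ y k + U j k)
    (i : Fin n) (hi : y i = 0) :
    ∀ j : Fin n, y j ≤ V' j j := by
  intro j
  rcases eq_or_ne i j with rfl | hij
  · exact hi ▸ hVnn i i
  · -- buyer `i` gets utility `0` and must not envy buyer `j`
    have hno_envy : 0 ≥ y j + (V' i j - V' j j) := hi ▸ hU i j ▸ hy i j hij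
    linarith [hVnn i j]

/-- If `V'` is entrywise nonnegative, `y` is a nonnegative solution of the
utility constraints `y j ≥ y k + U j k` (for `j ≠ k`, with
`U j k = V' j k - V' k k`) and `y i = 0` for some `i`, then `y j ≤ V' j j` for
every `j`; equivalently the prices `p j = V' j j - y j` are nonnegative and
each buyer's utility `V' j j - p j = y j` for his allocated item is
nonnegative. -/
theorem utilities_le_diagonal
    (n : ℕ) (hn : 1 ≤ n) (V' : Fin n → Fin n → ℝ)
    (hVnn : ∀ j k : Fin n, 0 ≤ V' j k)
    (U : Fin n → Fin n → ℝ) (hU : ∀ j k, U j k = V' j k - V' k k)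
    (y : Fin n → ℝ) (hynn : ∀ j, 0 ≤ y j)
    (hy : ∀ j k : Fin n, j ≠ k → y j ≥ y k + U j k)
    (i : Fin n) (hi : y i = 0) :
    ∀ j : Fin n, y j ≤ V' j j :=
  utilities_le_diagonal_general n V' hVnn U hU y hy i hi
end

section
/- Let n ≥ 1, let V : Fin n → Fin n → ℝ be entrywise nonnegative, let σ : Equiv.Perm (Fin n) maximize ∑_j V (π j) j over all permutations π, define V' i j = V (σ i) j and U j k = V' j k − V' k k. Define y : ℕ → Fin n → ℝ by y 0 j = 0 and y (t+1) j = max over k of (y t k + U j k), let ȳ j = y (n−1) j, and set prices p j = V' j j − ȳ j. Then p maximizes the seller's revenue among envy-free price vectors for the allocation σ: for every price vector q : Fin n → ℝ such that V' j j − q j ≥ 0 for all j and V' j j − q j ≥ V' j k − q k for all j ≠ k, one has ∑_j q j ≤ ∑_j p j. -/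
/-!
Writing `u j = V' j j - q j` for the buyers' utilities under an envy-free price vector `q`,
envy-freeness says exactly that `u k + U j k ≤ u j` for all `j, k`, and individual
rationality says `0 ≤ u`. So `u` is a supersolution of the iteration
`y (t+1) j = max_k (y t k + U j k)` started at `y 0 = 0`, and by induction it dominates every
iterate; in particular `ȳ ≤ u`, i.e. `q j ≤ V' j j - ȳ j = p j` item by item.
-/

open Finset

theorem utility_add_gain_le_of_envyFree {ι α : Type*} [AddCommGroup α] [PartialOrder α]
    {V : ι → ι → α} {price : ι → α}
    (henvy : ∀ j k, j ≠ k → V j j - price j ≥ V j k - price k) (j k : ι) :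
    V k k - price k + (V j k - V k k) ≤ V j j - price j := by
  rcases eq_or_ne j k with rfl | hne
  · simp
  · calc V k k - price k + (V j k - V k k) = V j k - price k := by abel
      _ ≤ V j j - price j := henvy j k hne

theorem iterate_sup'_le_of_supersolution {ι α : Type*} [Fintype ι] [SemilatticeSup α] [Add α]
    [AddRightMono α] (hne : (univ : Finset ι).Nonempty) {U : ι → ι → α} {y : ℕ → ι → α}
    {u : ι → α} (hstep : ∀ t j, y (t + 1) j = univ.sup' hne (fun k => y t k + U j k))
    (hsuper : ∀ j k, u k + U j k ≤ u j) (h0 : ∀ j, y 0 j ≤ u j) :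
    ∀ t j, y t j ≤ u j := by
  intro t
  induction t with
  | zero => exact h0
  | succ t ih =>
    intro j
    rw [hstep, sup'_le_iff]
    exact fun k _ => (add_le_add_left (ih k) _).trans (hsuper j k)

theorem prices_maximize_revenue_general
    (n : ℕ) (hn : 1 ≤ n)
    (V' : Fin n → Fin n → ℝ)
    (U : Fin n → Fin n → ℝ) (hU : ∀ j k, U j k = V' j k - V' k k)
    (y : ℕ → Fin n → ℝ) (h0 : ∀ j, y 0 j = 0)
    (hstep : ∀ t (j : Fin n), y (t + 1) j =
      Finset.univ.sup' ⟨⟨0, hn⟩, Finset.mem_univ _⟩ (fun k => y t k + U j k))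
    (ybar : Fin n → ℝ) (hybar : ∀ j, ybar j = y (n - 1) j)
    (p : Fin n → ℝ) (hp : ∀ j, p j = V' j j - ybar j) :
    ∀ q : Fin n → ℝ, (∀ j : Fin n, V' j j - q j ≥ 0) →
      (∀ j k : Fin n, j ≠ k → V' j j - q j ≥ V' j k - q k) →
      ∑ j, q j ≤ ∑ j, p j := by
  intro q hq_nonneg hq_envy
  have hsuper : ∀ j k, (V' k k - q k) + U j k ≤ V' j j - q j := fun j k => by
    simpa only [hU] using utility_add_gain_le_of_envyFree hq_envy j k
  have hy_le := iterate_sup'_le_of_supersolution _ hstep hsuper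
    fun j => (h0 j).symm ▸ hq_nonneg j
  refine sum_le_sum fun j _ => ?_
  rw [hp, hybar]
  linarith [hy_le (n - 1) j]

/-- Theorem 2 (revenue maximality): the prices `p j = V' j j - ȳ j` obtained
from the limit `ȳ = y (n-1)` of the PricesEFPM iteration maximize the seller's
revenue among all envy-free price vectors for the optimal allocation `σ`. -/
theorem prices_maximize_revenue
    (n : ℕ) (hn : 1 ≤ n) (V : Fin n → Fin n → ℝ)
    (hVnn : ∀ i j : Fin n, 0 ≤ V i j)
    (σ : Equiv.Perm (Fin n))
    (hσ : ∀ π : Equiv.Perm (Fin n), ∑ j, V (π j) j ≤ ∑ j, V (σ j) j)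
    (V' : Fin n → Fin n → ℝ) (hV' : ∀ i j, V' i j = V (σ i) j)
    (U : Fin n → Fin n → ℝ) (hU : ∀ j k, U j k = V' j k - V' k k)
    (y : ℕ → Fin n → ℝ) (h0 : ∀ j, y 0 j = 0)
    (hstep : ∀ t (j : Fin n), y (t + 1) j =
      Finset.univ.sup' ⟨⟨0, hn⟩, Finset.mem_univ _⟩ (fun k => y t k + U j k))
    (ybar : Fin n → ℝ) (hybar : ∀ j, ybar j = y (n - 1) j)
    (p : Fin n → ℝ) (hp : ∀ j, p j = V' j j - ybar j) :
    ∀ q : Fin n → ℝ, (∀ j : Fin n, V' j j - q j ≥ 0) →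
      (∀ j k : Fin n, j ≠ k → V' j j - q j ≥ V' j k - q k) →
      ∑ j, q j ≤ ∑ j, p j :=
  prices_maximize_revenue_general n hn V' U hU y h0 hstep ybar hybar p hp
end
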